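/- arXiv:1203.5738 — 2 statements merged into one kernel-verified Lean document; each statement's English description precedes it below -/
import Mathlib

section
/- The map sending a partition P of [n] to the matching M of [2n] with Arc(M) = {(2i, 2j−1) : (i,j) ∈ Arc(P)} is a bijection from the set of partitions of [n] to the set of matchings M of [2n] such that 2i ∈ min(M) and 2i−1 ∈ max(M) for all i ∈ [n]; moreover cr(P) = cr(M) and ne(P) = ne(M). -/
open Finset

/-- `IsArc P i j` : `(i,j)` is an arc of the set partition `P`. -/
def IsArc {n : ℕ} (P : Finpartition (Finset.univ : Finset (Fin n))) (i j : Fin n) : Prop :=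
  i < j ∧ ∃ B ∈ P.parts, i ∈ B ∧ j ∈ B ∧ ∀ k ∈ B, i < k → j ≤ k

/-- The set of minimal elements of blocks of `P`. -/
def blockMin {n : ℕ} (P : Finpartition (Finset.univ : Finset (Fin n))) : Set (Fin n) :=
  {i | ∃ B ∈ P.parts, i ∈ B ∧ ∀ k ∈ B, i ≤ k}

/-- The set of maximal elements of blocks of `P`. -/
def blockMax {n : ℕ} (P : Finpartition (Finset.univ : Finset (Fin n))) : Set (Fin n) :=
  {i | ∃ B ∈ P.parts, i ∈ B ∧ ∀ k ∈ B, k ≤ i}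

/-- An `r`-colored partition of `[n]`. -/
structure ColoredPartition (n r : ℕ) where
  P : Finpartition (Finset.univ : Finset (Fin n))
  color : ∀ i j : Fin n, IsArc P i j → Fin r

/-- `Λ` has a `k`-crossing: `k` same-colored arcs with
`i₁ < ⋯ < i_k < j₁ < ⋯ < j_k`. -/
def HasCrossing {n r : ℕ} (Λ : ColoredPartition n r) (k : ℕ) : Prop :=
  ∃ (f g : Fin k → Fin n) (c : Fin r),
    StrictMono f ∧ StrictMono g ∧ (∀ s t : Fin k, f s < g t) ∧
    ∀ t, ∃ h : IsArc Λ.P (f t) (g t), Λ.color (f t) (g t) h = c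

/-- `Λ` has a `k`-nesting: `k` same-colored arcs with
`i₁ < ⋯ < i_k < j_k < ⋯ < j₁`. -/
def HasNesting {n r : ℕ} (Λ : ColoredPartition n r) (k : ℕ) : Prop :=
  ∃ (f g : Fin k → Fin n) (c : Fin r),
    StrictMono f ∧ StrictAnti g ∧ (∀ s t : Fin k, f s < g t) ∧
    ∀ t, ∃ h : IsArc Λ.P (f t) (g t), Λ.color (f t) (g t) h = c

/-- Uncolored `k`-crossing. -/
def HasCrossingP {n : ℕ} (P : Finpartition (Finset.univ : Finset (Fin n))) (k : ℕ) : Prop :=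
  ∃ f g : Fin k → Fin n, StrictMono f ∧ StrictMono g ∧ (∀ s t : Fin k, f s < g t) ∧
    ∀ t, IsArc P (f t) (g t)

/-- Uncolored `k`-nesting. -/
def HasNestingP {n : ℕ} (P : Finpartition (Finset.univ : Finset (Fin n))) (k : ℕ) : Prop :=
  ∃ f g : Fin k → Fin n, StrictMono f ∧ StrictAnti g ∧ (∀ s t : Fin k, f s < g t) ∧
    ∀ t, IsArc P (f t) (g t)

/-- The crossing number of a colored partition: the largest `k` with a `k`-crossing. -/
noncomputable def crNum {n r : ℕ} (Λ : ColoredPartition n r) : ℕ :=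
  sSup {k | 0 < k ∧ HasCrossing Λ k}

noncomputable def neNum {n r : ℕ} (Λ : ColoredPartition n r) : ℕ :=
  sSup {k | 0 < k ∧ HasNesting Λ k}

noncomputable def crNumP {n : ℕ} (P : Finpartition (Finset.univ : Finset (Fin n))) : ℕ :=
  sSup {k | 0 < k ∧ HasCrossingP P k}

noncomputable def neNumP {n : ℕ} (P : Finpartition (Finset.univ : Finset (Fin n))) : ℕ :=
  sSup {k | 0 < k ∧ HasNestingP P k}

/-- A matching: all blocks have at most two elements. -/
def IsMatching {m : ℕ} (P : Finpartition (Finset.univ : Finset (Fin m))) : Prop :=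
  ∀ B ∈ P.parts, B.card ≤ 2

/-- A complete matching: all blocks have exactly two elements. -/
def IsCompleteMatching {m : ℕ} (P : Finpartition (Finset.univ : Finset (Fin m))) : Prop :=
  ∀ B ∈ P.parts, B.card = 2

/-- `i ∈ [n] ↦ 2i ∈ [2n]` (0-based: the element of 1-based value `2(i+1)-1`). -/
def dbl {n : ℕ} (i : Fin n) : Fin (2 * n) := ⟨2 * i.1, by have := i.2; omega⟩

/-- `i ∈ [n] ↦` 0-based index `2i+1` of `[2n]` (1-based value `2(i+1)`). -/
def dbl1 {n : ℕ} (i : Fin n) : Fin (2 * n) := ⟨2 * i.1 + 1, by have := i.2; omega⟩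

/-- Enhanced arcs: arcs of `P` together with loops `(i,i)` at isolated points. -/
def EnhIsArc {n : ℕ} (P : Finpartition (Finset.univ : Finset (Fin n))) (i j : Fin n) : Prop :=
  IsArc P i j ∨ (i = j ∧ i ∈ blockMin P ∧ i ∈ blockMax P)

/-- An `r`-colored enhanced partition of `[n]`. -/
structure EnhColoredPartition (n r : ℕ) where
  P : Finpartition (Finset.univ : Finset (Fin n))
  color : ∀ i j : Fin n, EnhIsArc P i j → Fin r

/-- Enhanced `k`-crossing: same-colored enhanced arcs with
`i₁ < ⋯ < i_k ≤ j₁ < ⋯ < j_k`. -/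
def HasEnhCrossing {n r : ℕ} (Λ : EnhColoredPartition n r) (k : ℕ) : Prop :=
  ∃ (f g : Fin k → Fin n) (c : Fin r),
    StrictMono f ∧ StrictMono g ∧ (∀ s t : Fin k, f s ≤ g t) ∧
    ∀ t, ∃ h : EnhIsArc Λ.P (f t) (g t), Λ.color (f t) (g t) h = c

/-- Enhanced `k`-nesting: same-colored enhanced arcs with
`i₁ < ⋯ < i_k ≤ j_k < ⋯ < j₁`. -/
def HasEnhNesting {n r : ℕ} (Λ : EnhColoredPartition n r) (k : ℕ) : Prop :=
  ∃ (f g : Fin k → Fin n) (c : Fin r),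
    StrictMono f ∧ StrictAnti g ∧ (∀ s t : Fin k, f s ≤ g t) ∧
    ∀ t, ∃ h : EnhIsArc Λ.P (f t) (g t), Λ.color (f t) (g t) h = c

noncomputable def enhCrNum {n r : ℕ} (Λ : EnhColoredPartition n r) : ℕ :=
  sSup {k | 0 < k ∧ HasEnhCrossing Λ k}

noncomputable def enhNeNum {n r : ℕ} (Λ : EnhColoredPartition n r) : ℕ :=
  sSup {k | 0 < k ∧ HasEnhNesting Λ k}

/-- The `(r+1)²` steps: `±e_i` (first summand with a sign), `e_i − e_j` for `i ≠ j`,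
and `r+1` distinct zero steps. -/
def Step (r : ℕ) : Type :=
  (Fin r × Bool) ⊕ ({p : Fin r × Fin r // p.1 ≠ p.2} ⊕ Fin (r + 1))

/-- The displacement vector of a step. -/
def stepVec {r : ℕ} : Step r → Fin r → ℤ
  | Sum.inl (i, b) => fun t => if t = i then (if b then 1 else -1) else 0
  | Sum.inr (Sum.inl p) => fun t => (if t = p.1.1 then 1 else 0) - (if t = p.1.2 then 1 else 0)
  | Sum.inr (Sum.inr _) => fun _ => 0

/-- Position after the first `k` steps of a walk started at the origin. -/
def walkPos {r m : ℕ} (w : Fin m → Step r) (k : ℕ) (t : Fin r) : ℤ :=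
  ∑ i ∈ Finset.univ.filter (fun i : Fin m => i.1 < k), stepVec (w i) t

/-- The walk stays in `ℕ^r` throughout and returns to the origin. -/
def IsClosedWalk {r m : ℕ} (w : Fin m → Step r) : Prop :=
  (∀ k : ℕ, ∀ t : Fin r, 0 ≤ walkPos w k t) ∧ ∀ t : Fin r, walkPos w m t = 0

/-- An `r`-colored permutation of `[n]`. -/
structure ColoredPerm (n r : ℕ) where
  sigma : Equiv.Perm (Fin n)
  cplus : ∀ i : Fin n, i ≤ sigma i → Fin r
  cminus : ∀ i : Fin n, sigma i < i → Fin r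

/-- `k`-crossing of a colored permutation: an enhanced `k`-crossing among same-colored
upper arcs `(i, σ i)`, or an ordinary `k`-crossing among same-colored lower arcs `(σ i, i)`. -/
def PermHasCrossing {n r : ℕ} (S : ColoredPerm n r) (k : ℕ) : Prop :=
  (∃ (f : Fin k → Fin n) (c : Fin r),
      StrictMono f ∧ StrictMono (fun t => S.sigma (f t)) ∧
      (∀ s t : Fin k, f s ≤ S.sigma (f t)) ∧
      ∀ t, ∃ h : f t ≤ S.sigma (f t), S.cplus (f t) h = c) ∨
  (∃ (f : Fin k → Fin n) (c : Fin r),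
      StrictMono (fun t => S.sigma (f t)) ∧ StrictMono f ∧
      (∀ s t : Fin k, S.sigma (f s) < f t) ∧
      ∀ t, ∃ h : S.sigma (f t) < f t, S.cminus (f t) h = c)

/-- `k`-nesting of a colored permutation. -/
def PermHasNesting {n r : ℕ} (S : ColoredPerm n r) (k : ℕ) : Prop :=
  (∃ (f : Fin k → Fin n) (c : Fin r),
      StrictMono f ∧ StrictAnti (fun t => S.sigma (f t)) ∧
      (∀ s t : Fin k, f s ≤ S.sigma (f t)) ∧
      ∀ t, ∃ h : f t ≤ S.sigma (f t), S.cplus (f t) h = c) ∨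
  (∃ (f : Fin k → Fin n) (c : Fin r),
      StrictMono (fun t => S.sigma (f t)) ∧ StrictAnti f ∧
      (∀ s t : Fin k, S.sigma (f s) < f t) ∧
      ∀ t, ∃ h : S.sigma (f t) < f t, S.cminus (f t) h = c)

/-!
A partition of `[N]` is determined by its arcs: its blocks are the connected components of the
arc graph. Conversely, every relation that is increasing, functional and injective is the arc
relation of the partition into its connected components. Doubling the arcs `(i, j)` of a
partition of `[n]` to `(2i, 2j − 1)` gives such a relation on `[2n]` in which no arc starts where
another one ends, so its blocks are pairs and singletons, every `2i` starts a block and every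
`2i − 1` ends one. Conversely, in a matching with that property every arc runs from some `2i` to
some `2j − 1`, so it is the doubling of a unique partition. The doubling is strictly increasing on
left and on right endpoints separately, and `2i < 2j − 1` iff `i < j`, so it carries crossings
to crossings and nestings to nestings.
-/

open Relation Function

namespace Finpartition

variable {α : Type*} [DecidableEq α] {s : Finset α} {P Q : Finpartition s} {a b : α}

lemma mem_part_comm : b ∈ P.part a ↔ a ∈ P.part b := by
  simp only [mem_part_iff_exists, and_comm]

lemma part_eq_of_mem_part (h : b ∈ P.part a) : P.part b = P.part a :=
  P.part_eq_of_mem (P.part_mem.2 (P.part_nonempty.1 ⟨b, h⟩)) h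

lemma eq_of_forall_part_eq (h : ∀ a, P.part a = Q.part a) : P = Q := by
  ext B
  constructor
  · intro hB
    obtain ⟨x, hx⟩ := P.nonempty_of_mem_parts hB
    rw [← P.part_eq_of_mem hB hx, h]
    exact Q.part_mem.2 (P.le hB hx)
  · intro hB
    obtain ⟨x, hx⟩ := Q.nonempty_of_mem_parts hB
    rw [← Q.part_eq_of_mem hB hx, ← h]
    exact P.part_mem.2 (Q.le hB hx)

end Finpartition

open Finpartition

section Arcs

variable {N : ℕ} {P Q : Finpartition (univ : Finset (Fin N))}

lemma isArc_iff_mem_part {i j : Fin N} :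
    IsArc P i j ↔ i < j ∧ j ∈ P.part i ∧ ∀ k ∈ P.part i, i < k → j ≤ k := by
  constructor
  · rintro ⟨hij, B, hB, hi, hj, hleast⟩
    rw [P.part_eq_of_mem hB hi]
    exact ⟨hij, hj, hleast⟩
  · rintro ⟨hij, hj, hleast⟩
    exact ⟨hij, P.part i, P.part_mem.2 (mem_univ i), P.mem_part (mem_univ i), hj, hleast⟩

lemma mem_part_of_isArc {i j : Fin N} (h : IsArc P i j) : j ∈ P.part i :=
  (isArc_iff_mem_part.1 h).2.1

lemma exists_isArc_le_of_mem_part {i j : Fin N} (hij : i < j) (hj : j ∈ P.part i) :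
    ∃ c, IsArc P i c ∧ c ≤ j := by
  have hT : ((P.part i).filter (i < ·)).Nonempty := ⟨j, mem_filter.2 ⟨hj, hij⟩⟩
  have hc := mem_filter.1 (min'_mem _ hT)
  refine ⟨_, isArc_iff_mem_part.2 ⟨hc.2, hc.1, fun k hk hik => ?_⟩, ?_⟩
  · exact min'_le _ k (mem_filter.2 ⟨hk, hik⟩)
  · exact min'_le _ j (mem_filter.2 ⟨hj, hij⟩)

lemma reflTransGen_isArc_of_mem_part {i j : Fin N} (hj : j ∈ P.part i) (hij : i ≤ j) :
    ReflTransGen (IsArc P) i j := by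
  rcases hij.eq_or_lt with rfl | hlt
  · exact .refl
  obtain ⟨c, hic, hcj⟩ := exists_isArc_le_of_mem_part hlt hj
  have hjc : j ∈ P.part c := part_eq_of_mem_part (mem_part_of_isArc hic) ▸ hj
  exact .head hic (reflTransGen_isArc_of_mem_part hjc hcj)
termination_by j.1 - i.1
decreasing_by have := Fin.lt_def.1 hic.1; have := Fin.le_def.1 hcj; omega

lemma mem_part_of_reflTransGen_isArc {i j : Fin N} (h : ReflTransGen (IsArc P) i j) :
    j ∈ P.part i := by
  induction h with
  | refl => exact P.mem_part (mem_univ i)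
  | tail _ hbc ih => exact part_eq_of_mem_part ih ▸ mem_part_of_isArc hbc

def ArcConnected (R : Fin N → Fin N → Prop) (i j : Fin N) : Prop :=
  ReflTransGen R i j ∨ ReflTransGen R j i

lemma mem_part_iff_arcConnected {i j : Fin N} : j ∈ P.part i ↔ ArcConnected (IsArc P) i j := by
  constructor
  · intro h
    rcases le_total i j with hij | hji
    · exact .inl (reflTransGen_isArc_of_mem_part h hij)
    · exact .inr (reflTransGen_isArc_of_mem_part (mem_part_comm.1 h) hji)
  · rintro (h | h)
    · exact mem_part_of_reflTransGen_isArc h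
    · exact mem_part_comm.1 (mem_part_of_reflTransGen_isArc h)

lemma eq_of_isArc_eq (h : IsArc P = IsArc Q) : P = Q :=
  eq_of_forall_part_eq fun i => by
    ext j
    rw [mem_part_iff_arcConnected, h, ← mem_part_iff_arcConnected]

lemma mem_blockMin_iff {i : Fin N} : i ∈ blockMin P ↔ ∀ h, ¬ IsArc P h i := by
  constructor
  · rintro ⟨B, hB, hi, hmin⟩ h hhi
    have hh : h ∈ P.part i := mem_part_comm.1 (mem_part_of_isArc hhi)
    exact (hmin h (P.part_eq_of_mem hB hi ▸ hh)).not_gt hhi.1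
  · intro h
    refine ⟨P.part i, P.part_mem.2 (mem_univ i), P.mem_part (mem_univ i), fun k hk => ?_⟩
    by_contra! hki
    rcases (reflTransGen_isArc_of_mem_part (mem_part_comm.1 hk) hki.le).cases_tail with
      rfl | ⟨c, _, hci⟩
    · exact lt_irrefl _ hki
    · exact h c hci

lemma mem_blockMax_iff {i : Fin N} : i ∈ blockMax P ↔ ∀ j, ¬ IsArc P i j := by
  constructor
  · rintro ⟨B, hB, hi, hmax⟩ j hij
    exact (hmax j (P.part_eq_of_mem hB hi ▸ mem_part_of_isArc hij)).not_gt hij.1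
  · intro h
    refine ⟨P.part i, P.part_mem.2 (mem_univ i), P.mem_part (mem_univ i), fun k hk => ?_⟩
    by_contra! hik
    rcases (reflTransGen_isArc_of_mem_part hk hik.le).cases_head with rfl | ⟨c, hic, _⟩
    · exact lt_irrefl _ hik
    · exact h c hic

lemma isMatching_of_forall_mem_blockMin_or_mem_blockMax
    (h : ∀ i, i ∈ blockMin P ∨ i ∈ blockMax P) : IsMatching P := by
  intro B hB
  have hne := P.nonempty_of_mem_parts hB
  have hsub : B ⊆ {B.min' hne, B.max' hne} := by
    intro x hx
    rw [mem_insert, mem_singleton]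
    rcases h x with ⟨B', hB', hxB', hmin⟩ | ⟨B', hB', hxB', hmax⟩
    · obtain rfl := P.eq_of_mem_parts hB hB' hx hxB'
      exact .inl (le_antisymm (hmin _ (B.min'_mem hne)) (B.min'_le x hx))
    · obtain rfl := P.eq_of_mem_parts hB hB' hx hxB'
      exact .inr (le_antisymm (B.le_max' x hx) (hmax _ (B.max'_mem hne)))
  exact (card_le_card hsub).trans card_le_two

end Arcs

structure IsArcRel {N : ℕ} (R : Fin N → Fin N → Prop) : Prop where
  lt : ∀ {i j}, R i j → i < j
  right_unique : Relator.RightUnique R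
  left_unique : Relator.LeftUnique R

section ArcRel

variable {N K : ℕ} {R : Fin N → Fin N → Prop}

lemma isArcRel_isArc (P : Finpartition (univ : Finset (Fin N))) : IsArcRel (IsArc P) where
  lt h := h.1
  right_unique i j j' h h' := by
    rw [isArc_iff_mem_part] at h h'
    exact le_antisymm (h.2.2 j' h'.2.1 h'.1) (h'.2.2 j h.2.1 h.1)
  left_unique i i' j h h' := by
    by_contra hne
    have hi' : i' ∈ P.part i := by
      rw [← part_eq_of_mem_part (mem_part_of_isArc h), part_eq_of_mem_part (mem_part_of_isArc h')]
      exact P.mem_part (mem_univ i')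
    rcases lt_or_gt_of_ne hne with hlt | hlt
    · exact ((isArc_iff_mem_part.1 h).2.2 i' hi' hlt).not_gt h'.1
    · exact ((isArc_iff_mem_part.1 h').2.2 i (mem_part_comm.1 hi') hlt).not_gt h.1

lemma IsArcRel.map (hR : IsArcRel R) {u v : Fin N → Fin K} (hu : Injective u)
    (hv : Injective v) (huv : ∀ i j, i < j → u i < v j) : IsArcRel (Relation.Map R u v) where
  lt := by
    rintro _ _ ⟨i, j, hij, rfl, rfl⟩
    exact huv i j (hR.lt hij)
  right_unique := by
    rintro _ _ _ ⟨i, j, hij, rfl, rfl⟩ ⟨i', j', hij', hi, rfl⟩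
    cases hu hi
    rw [hR.right_unique hij hij']
  left_unique := by
    rintro _ _ _ ⟨i, j, hij, rfl, rfl⟩ ⟨i', j', hij', rfl, hj⟩
    cases hv hj
    rw [hR.left_unique hij hij']

lemma IsArcRel.comap {R : Fin K → Fin K → Prop} (hR : IsArcRel R) {u v : Fin N → Fin K}
    (hu : Injective u) (hv : Injective v) (huv : ∀ i j, u i < v j → i < j) :
    IsArcRel fun i j => R (u i) (v j) where
  lt h := huv _ _ (hR.lt h)
  right_unique _ _ _ h h' := hv (hR.right_unique h h')
  left_unique _ _ _ h h' := hu (hR.left_unique h h')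

lemma IsArcRel.le_of_reflTransGen (hR : IsArcRel R) {i j : Fin N} (h : ReflTransGen R i j) :
    i ≤ j := by
  induction h with
  | refl => exact le_rfl
  | tail _ hbc ih => exact ih.trans (hR.lt hbc).le

/-- Chains of arcs do not branch, so two chains from a common point are comparable. -/
lemma IsArcRel.arcConnected_equivalence (hR : IsArcRel R) : Equivalence (ArcConnected R) where
  refl _ := .inl .refl
  symm h := h.symm
  trans := by
    rintro i j k (hij | hji) (hjk | hkj)
    · exact .inl (hij.trans hjk)
    · have hji : ReflTransGen (swap R) j i := reflTransGen_swap.2 hij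
      have hjk : ReflTransGen (swap R) j k := reflTransGen_swap.2 hkj
      have hU : Relator.RightUnique (swap R) := fun _ _ _ h h' => hR.left_unique h h'
      rcases hji.total_of_right_unique hU hjk with h | h
      · exact .inr (reflTransGen_swap.1 h)
      · exact .inl (reflTransGen_swap.1 h)
    · exact hji.total_of_right_unique hR.right_unique hjk
    · exact .inr (hkj.trans hji)

lemma IsArcRel.isArc_eq (hR : IsArcRel R) {P : Finpartition (univ : Finset (Fin N))}
    (hP : ∀ i j, j ∈ P.part i ↔ ArcConnected R i j) : IsArc P = R := by
  ext i j
  rw [isArc_iff_mem_part, hP]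
  constructor
  · rintro ⟨hij, hconn | hji, hleast⟩
    · rcases hconn.cases_head with rfl | ⟨c, hic, hcj⟩
      · exact absurd hij (lt_irrefl _)
      · have hjc := hleast c ((hP i c).2 (.inl (.single hic))) (hR.lt hic)
        exact le_antisymm hjc (hR.le_of_reflTransGen hcj) ▸ hic
    · exact absurd (hR.le_of_reflTransGen hji) hij.not_ge
  · intro h
    refine ⟨hR.lt h, .inl (.single h), fun k hk hik => ?_⟩
    rcases (hP i k).1 hk with hik' | hki
    · rcases hik'.cases_head with rfl | ⟨c, hic, hck⟩
      · exact absurd hik (lt_irrefl _)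
      · exact hR.right_unique h hic ▸ hR.le_of_reflTransGen hck
    · exact absurd (hR.le_of_reflTransGen hki) hik.not_ge

noncomputable def ofArcs (hR : IsArcRel R) : Finpartition (univ : Finset (Fin N)) :=
  letI := Classical.decRel (ArcConnected R)
  Finpartition.ofSetoid ⟨ArcConnected R, hR.arcConnected_equivalence⟩

lemma isArc_ofArcs (hR : IsArcRel R) : IsArc (ofArcs hR) = R :=
  letI := Classical.decRel (ArcConnected R)
  hR.isArc_eq fun _ _ => Finpartition.mem_part_ofSetoid_iff_rel

end ArcRel

section Doubling

variable {n : ℕ}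

lemma dbl_strictMono : StrictMono (dbl : Fin n → Fin (2 * n)) := fun i j h => by
  simp only [Fin.lt_def, dbl] at h ⊢; omega

lemma dbl1_strictMono : StrictMono (dbl1 : Fin n → Fin (2 * n)) := fun i j h => by
  simp only [Fin.lt_def, dbl1] at h ⊢; omega

lemma dbl1_lt_dbl_iff {i j : Fin n} : dbl1 i < dbl j ↔ i < j := by
  simp only [Fin.lt_def, dbl1, dbl]; omega

lemma dbl1_ne_dbl (i j : Fin n) : dbl1 i ≠ dbl j := by
  simp only [ne_eq, Fin.ext_iff, dbl1, dbl]; omega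

lemma exists_dbl_or_dbl1 (x : Fin (2 * n)) : (∃ i, x = dbl i) ∨ ∃ i, x = dbl1 i := by
  rcases Nat.even_or_odd' x.1 with ⟨m, hm | hm⟩
  · exact .inl ⟨⟨m, by omega⟩, Fin.ext (by simp [dbl, hm])⟩
  · exact .inr ⟨⟨m, by omega⟩, Fin.ext (by simp [dbl1, hm])⟩

noncomputable def toMatching (P : Finpartition (univ : Finset (Fin n))) :
    Finpartition (univ : Finset (Fin (2 * n))) :=
  ofArcs <| (isArcRel_isArc P).map dbl1_strictMono.injective dbl_strictMono.injective
    fun _ _ => dbl1_lt_dbl_iff.2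

noncomputable def ofMatching (M : Finpartition (univ : Finset (Fin (2 * n)))) :
    Finpartition (univ : Finset (Fin n)) :=
  ofArcs <| (isArcRel_isArc M).comap dbl1_strictMono.injective dbl_strictMono.injective
    fun _ _ => dbl1_lt_dbl_iff.1

variable {P : Finpartition (univ : Finset (Fin n))} {M : Finpartition (univ : Finset (Fin (2 * n)))}

lemma isArc_toMatching {a b : Fin (2 * n)} :
    IsArc (toMatching P) a b ↔ ∃ i j, IsArc P i j ∧ a = dbl1 i ∧ b = dbl j := by
  rw [toMatching, isArc_ofArcs, Relation.map_apply]
  simp only [eq_comm]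

lemma isArc_ofMatching {i j : Fin n} : IsArc (ofMatching M) i j ↔ IsArc M (dbl1 i) (dbl j) := by
  rw [ofMatching, isArc_ofArcs]

lemma dbl1_mem_blockMin_toMatching (i : Fin n) : dbl1 i ∈ blockMin (toMatching P) := by
  rw [mem_blockMin_iff]
  rintro _ h
  obtain ⟨_, j, _, _, hj⟩ := isArc_toMatching.1 h
  exact dbl1_ne_dbl i j hj

lemma dbl_mem_blockMax_toMatching (i : Fin n) : dbl i ∈ blockMax (toMatching P) := by
  rw [mem_blockMax_iff]
  rintro _ h
  obtain ⟨j, _, _, hj, _⟩ := isArc_toMatching.1 h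
  exact dbl1_ne_dbl j i hj.symm

lemma isMatching_toMatching : IsMatching (toMatching P) := by
  refine isMatching_of_forall_mem_blockMin_or_mem_blockMax fun x => ?_
  rcases exists_dbl_or_dbl1 x with ⟨i, rfl⟩ | ⟨i, rfl⟩
  · exact .inr (dbl_mem_blockMax_toMatching i)
  · exact .inl (dbl1_mem_blockMin_toMatching i)

lemma ofMatching_toMatching (P : Finpartition (univ : Finset (Fin n))) :
    ofMatching (toMatching P) = P := by
  refine eq_of_isArc_eq (funext₂ fun i j => propext ?_)
  rw [isArc_ofMatching, isArc_toMatching]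
  constructor
  · rintro ⟨i', j', h, hi, hj⟩
    rwa [dbl1_strictMono.injective hi, dbl_strictMono.injective hj]
  · exact fun h => ⟨i, j, h, rfl, rfl⟩

/-- No arc of `M` leaves a `dbl i` or enters a `dbl1 j`, so every arc is doubled. -/
lemma toMatching_ofMatching (hM : ∀ i : Fin n, dbl1 i ∈ blockMin M ∧ dbl i ∈ blockMax M) :
    toMatching (ofMatching M) = M := by
  refine eq_of_isArc_eq (funext₂ fun a b => propext ?_)
  rw [isArc_toMatching]
  constructor
  · rintro ⟨i, j, h, rfl, rfl⟩
    exact isArc_ofMatching.1 h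
  · intro h
    obtain ⟨i, rfl⟩ : ∃ i, a = dbl1 i := by
      rcases exists_dbl_or_dbl1 a with ⟨i, rfl⟩ | hi
      · exact absurd h (mem_blockMax_iff.1 (hM i).2 b)
      · exact hi
    obtain ⟨j, rfl⟩ : ∃ j, b = dbl j := by
      rcases exists_dbl_or_dbl1 b with hj | ⟨j, rfl⟩
      · exact hj
      · exact absurd h (mem_blockMin_iff.1 (hM j).1 _)
    exact ⟨i, j, isArc_ofMatching.2 h, rfl, rfl⟩

noncomputable def matchingEquiv (n : ℕ) :
    Finpartition (univ : Finset (Fin n)) ≃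
      {M : Finpartition (univ : Finset (Fin (2 * n))) //
        IsMatching M ∧ ∀ i : Fin n, dbl1 i ∈ blockMin M ∧ dbl i ∈ blockMax M} where
  toFun P := ⟨toMatching P, isMatching_toMatching,
    fun i => ⟨dbl1_mem_blockMin_toMatching i, dbl_mem_blockMax_toMatching i⟩⟩
  invFun M := ofMatching M.1
  left_inv := ofMatching_toMatching
  right_inv M := Subtype.ext (toMatching_ofMatching M.2.2)

end Doubling

section Transport

variable {n m : ℕ} {P : Finpartition (univ : Finset (Fin n))}
  {Q : Finpartition (univ : Finset (Fin m))} {u v : Fin n → Fin m}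

lemma exists_arcs_iff_of_isArc_iff
    (hQ : ∀ a b, IsArc Q a b ↔ ∃ i j, IsArc P i j ∧ a = u i ∧ b = v j) {k : ℕ}
    (C : (Fin k → Fin m) → (Fin k → Fin m) → Prop) :
    (∃ f g, C f g ∧ ∀ t, IsArc Q (f t) (g t)) ↔
      ∃ F G, C (u ∘ F) (v ∘ G) ∧ ∀ t, IsArc P (F t) (G t) := by
  constructor
  · rintro ⟨f, g, hC, harcs⟩
    choose F G hFG hf hg using fun t => (hQ _ _).1 (harcs t)
    obtain rfl : f = u ∘ F := funext hf
    obtain rfl : g = v ∘ G := funext hg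
    exact ⟨F, G, hC, hFG⟩
  · rintro ⟨F, G, hC, hFG⟩
    exact ⟨u ∘ F, v ∘ G, hC, fun t => (hQ _ _).2 ⟨F t, G t, hFG t, rfl, rfl⟩⟩

variable (hu : StrictMono u) (hv : StrictMono v) (huv : ∀ i j, u i < v j ↔ i < j)
  (hQ : ∀ a b, IsArc Q a b ↔ ∃ i j, IsArc P i j ∧ a = u i ∧ b = v j)
include hu hv huv hQ

lemma crNumP_eq_of_isArc_iff : crNumP Q = crNumP P := by
  suffices ∀ k, HasCrossingP Q k ↔ HasCrossingP P k by simp only [crNumP, this]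
  intro k
  simpa only [HasCrossingP, and_assoc, StrictMono, comp, hu.lt_iff_lt, hv.lt_iff_lt, huv] using
    exists_arcs_iff_of_isArc_iff hQ fun f g => StrictMono f ∧ StrictMono g ∧ ∀ s t, f s < g t

lemma neNumP_eq_of_isArc_iff : neNumP Q = neNumP P := by
  suffices ∀ k, HasNestingP Q k ↔ HasNestingP P k by simp only [neNumP, this]
  intro k
  simpa only [HasNestingP, and_assoc, StrictMono, StrictAnti, comp, hu.lt_iff_lt, hv.lt_iff_lt,
    huv] using
    exists_arcs_iff_of_isArc_iff hQ fun f g => StrictMono f ∧ StrictAnti g ∧ ∀ s t, f s < g t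

end Transport

/-- The map `P ↦ M`, `Arc(M) = {(2i, 2j−1) : (i,j) ∈ Arc(P)}` (0-based:
`(dbl1 i, dbl j)`), is a bijection from partitions of `[n]` onto matchings `M` of
`[2n]` with `2i ∈ min(M)` and `2i−1 ∈ max(M)` for all `i ∈ [n]`, and it preserves
crossing and nesting numbers. -/
theorem stmt4 (n : ℕ) :
    ∃ e : Finpartition (Finset.univ : Finset (Fin n)) ≃
        {M : Finpartition (Finset.univ : Finset (Fin (2 * n))) //
          IsMatching M ∧ ∀ i : Fin n, dbl1 i ∈ blockMin M ∧ dbl i ∈ blockMax M},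
      ∀ P : Finpartition (Finset.univ : Finset (Fin n)),
        (∀ a b : Fin (2 * n), IsArc (e P).1 a b ↔
          ∃ i j : Fin n, IsArc P i j ∧ a = dbl1 i ∧ b = dbl j) ∧
        crNumP P = crNumP (e P).1 ∧ neNumP P = neNumP (e P).1 := by
  refine ⟨matchingEquiv n, fun P => ⟨fun _ _ => isArc_toMatching, ?_, ?_⟩⟩
  · exact (crNumP_eq_of_isArc_iff dbl1_strictMono dbl_strictMono (fun _ _ => dbl1_lt_dbl_iff)
      fun _ _ => isArc_toMatching).symm
  · exact (neNumP_eq_of_isArc_iff dbl1_strictMono dbl_strictMono (fun _ _ => dbl1_lt_dbl_iff)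
      fun _ _ => isArc_toMatching).symm
end

section
/- The ordinary generating function Σ_{n≥0} NCN_{2,2}(n,2) x^n counting 2-colored partitions of [n] that are both noncrossing and nonnesting equals (1 − 6x + 7x²)/(1 − 7x + 11x² − x³). -/
open Finset

/-- The number of 2-colored partitions of `[n]` that are both noncrossing
and nonnesting. -/
noncomputable def ncn222 (n : ℕ) : ℕ :=
  Nat.card {Λ : ColoredPartition n 2 // ¬HasCrossing Λ 2 ∧ ¬HasNesting Λ 2}

/-!
Two arcs of the same color cross or nest exactly when they overlap, so a colored partition is
noncrossing and nonnesting iff, within each color, every arc ends before (or where) the next one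
starts. Such a partition is recovered from its word, whose letter at a point records the color of
the arc ending there and the color of the arc starting there: an arc opened at `i` is closed at
the first later point that closes its color. The words that arise are exactly those accepted by
a finite automaton whose state is the set of colors with an open arc, so `NCN_{2,2}(n,2)` is the
`(∅, ∅)` entry of `Tⁿ` for the `4 × 4` transfer matrix `T` of the automaton with two colors.
The `∅`-row of `T³ - 7T² + 11T - 1` vanishes, which is the recurrence behind the generating
function.
-/

open Relation

theorem Relation.eqvGen_iff_of_unique {α : Type*} {R : α → α → Prop} (hl : Relator.LeftUnique R)
    (hr : Relator.RightUnique R) {a b : α} :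
    EqvGen R a b ↔ ReflTransGen R a b ∨ ReflTransGen R b a := by
  refine ⟨fun h => ?_, fun h => h.elim (EqvGen.reflTransGen_le_eqvGen _ _ _)
    fun h => .symm _ _ (EqvGen.reflTransGen_le_eqvGen _ _ _ h)⟩
  have hl' : Relator.RightUnique (Function.swap R) := fun _ _ _ h h' => hl h h'
  induction h with
  | rel a b h => exact .inl (.single h)
  | refl => exact .inl .refl
  | symm a b _ ih => exact ih.symm
  | trans a b c _ _ ih ih' =>
    rcases ih with hab | hba <;> rcases ih' with hbc | hcb
    · exact .inl (hab.trans hbc)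
    · simpa only [reflTransGen_swap, or_comm] using
        ReflTransGen.total_of_right_unique hl' (reflTransGen_swap.2 hab) (reflTransGen_swap.2 hcb)
    · exact ReflTransGen.total_of_right_unique hr hba hbc
    · exact .inr (hcb.trans hba)

open PowerSeries in
theorem PowerSeries.mk_mul_eq_of_recurrence {R : Type*} [CommRing R] (a : ℕ → R) (p q u : R)
    (h : ∀ n, a (n + 3) = p * a (n + 2) + q * a (n + 1) + u * a n) :
    mk a * (1 - C p * X - C q * X ^ 2 - C u * X ^ 3) =
      C (a 0) + C (a 1 - p * a 0) * X + C (a 2 - p * a 1 - q * a 0) * X ^ 2 := by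
  rw [show mk a * (1 - C p * X - C q * X ^ 2 - C u * X ^ 3) =
      mk a - C p * (mk a * X ^ 1) - C q * (mk a * X ^ 2) - C u * (mk a * X ^ 3) by ring]
  ext (_ | _ | _ | n) <;> simp [coeff_mul_X_pow', h]
  ring

theorem Finpartition.ext_of_mem_part {α : Type*} [DecidableEq α] {s : Finset α}
    {P Q : Finpartition s} (h : ∀ a b, b ∈ P.part a ↔ b ∈ Q.part a) : P = Q := by
  have parts_subset {P Q : Finpartition s} (h : ∀ a b, b ∈ P.part a ↔ b ∈ Q.part a) :
      P.parts ⊆ Q.parts := by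
    intro B hB
    obtain ⟨a, ha⟩ := P.nonempty_of_mem_parts hB
    rw [← P.part_eq_of_mem hB ha, Finset.ext (h a), Q.part_mem]
    exact P.le hB ha
  exact Finpartition.ext ((parts_subset h).antisymm (parts_subset fun a b => (h a b).symm))

section ChainPartition

variable {n : ℕ}

open Classical in
noncomputable def chainPartition (R : Fin n → Fin n → Prop) :
    Finpartition (univ : Finset (Fin n)) :=
  Finpartition.ofSetoid (EqvGen.setoid R)

theorem mem_part_chainPartition {R : Fin n → Fin n → Prop} {a b : Fin n} :
    b ∈ (chainPartition R).part a ↔ EqvGen R a b := by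
  classical
  exact Finpartition.mem_part_ofSetoid_iff_rel

theorem isArc_chainPartition_iff {R : Fin n → Fin n → Prop} (hlt : ∀ a b, R a b → a < b)
    (hl : Relator.LeftUnique R) (hr : Relator.RightUnique R) {a b : Fin n} :
    IsArc (chainPartition R) a b ↔ R a b := by
  have le_of_reflTransGen {a b} (h : ReflTransGen R a b) : a ≤ b := by
    induction h with
    | refl => rfl
    | tail _ h ih => exact ih.trans (hlt _ _ h).le
  have chain_iff {a b} : b ∈ (chainPartition R).part a ↔ ReflTransGen R a b ∨ ReflTransGen R b a :=
    mem_part_chainPartition.trans (eqvGen_iff_of_unique hl hr)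
  constructor
  · rintro ⟨hab, B, hB, ha, hb, hmin⟩
    rw [← (chainPartition R).part_eq_of_mem hB ha] at hb hmin
    rcases chain_iff.1 hb with h | h
    · obtain rfl | ⟨m, ham, hmb⟩ := h.cases_head
      · exact absurd hab (lt_irrefl a)
      · have hbm := hmin m (chain_iff.2 (.inl (.single ham))) (hlt _ _ ham)
        rwa [(le_of_reflTransGen hmb).antisymm hbm] at ham
    · exact absurd hab (le_of_reflTransGen h).not_gt
  · intro h
    refine ⟨hlt _ _ h, _, (chainPartition R).part_mem.2 (mem_univ a),
      (chainPartition R).mem_part (mem_univ a), chain_iff.2 (.inl (.single h)), fun k hk hak => ?_⟩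
    rcases chain_iff.1 hk with h' | h'
    · obtain rfl | ⟨m, ham, hmk⟩ := h'.cases_head
      · exact absurd hak (lt_irrefl a)
      · exact hr h ham ▸ le_of_reflTransGen hmk
    · exact absurd hak (le_of_reflTransGen h').not_gt

end ChainPartition

namespace IsArc

variable {n : ℕ} {P : Finpartition (univ : Finset (Fin n))} {i j : Fin n}

theorem lt (h : IsArc P i j) : i < j := h.1

theorem part_eq (h : IsArc P i j) : P.part j = P.part i := by
  obtain ⟨-, B, hB, hi, hj, -⟩ := h
  rw [P.part_eq_of_mem hB hi, P.part_eq_of_mem hB hj]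

theorem rightUnique : Relator.RightUnique (IsArc P) := by
  rintro i j j' ⟨hij, B, hB, hi, hj, hmin⟩ ⟨hij', B', hB', hi', hj', hmin'⟩
  obtain rfl := P.eq_of_mem_parts hB hB' hi hi'
  exact le_antisymm (hmin j' hj' hij') (hmin' j hj hij)

theorem leftUnique : Relator.LeftUnique (IsArc P) := by
  rintro i i' j ⟨hij, B, hB, hi, hj, hmin⟩ ⟨hij', B', hB', hi', hj', hmin'⟩
  obtain rfl := P.eq_of_mem_parts hB hB' hj hj'
  by_contra hne
  rcases lt_or_gt_of_ne hne with hlt | hlt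
  · exact (hmin i' hi' hlt).not_gt hij'
  · exact (hmin' i hi hlt).not_gt hij

end IsArc

namespace Finpartition

variable {n : ℕ} {P : Finpartition (univ : Finset (Fin n))}

theorem exists_isArc_le_of_mem_part {a b : Fin n} (hab : a < b) (hb : b ∈ P.part a) :
    ∃ m ∈ P.part a, IsArc P a m ∧ m ≤ b := by
  classical
  have hne : {k ∈ P.part a | a < k}.Nonempty := ⟨b, mem_filter.2 ⟨hb, hab⟩⟩
  obtain ⟨hm, ham⟩ := mem_filter.1 (min'_mem _ hne)
  refine ⟨_, hm, ⟨ham, P.part a, P.part_mem.2 (mem_univ a), P.mem_part (mem_univ a), hm,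
    fun k hk hak => min'_le _ _ (mem_filter.2 ⟨hk, hak⟩)⟩, min'_le _ _ (mem_filter.2 ⟨hb, hab⟩)⟩

theorem reflTransGen_isArc_of_mem_part {a b : Fin n} (hab : a ≤ b) (hb : b ∈ P.part a) :
    ReflTransGen (IsArc P) a b := by
  obtain rfl | hab := hab.eq_or_lt
  · exact .refl
  obtain ⟨m, -, ham, hmb⟩ := exists_isArc_le_of_mem_part hab hb
  rw [← ham.part_eq] at hb
  exact .head ham (reflTransGen_isArc_of_mem_part hmb hb)
termination_by b.1 - a.1
decreasing_by have := ham.lt; omega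

theorem mem_part_iff_eqvGen_isArc {a b : Fin n} : b ∈ P.part a ↔ EqvGen (IsArc P) a b := by
  constructor
  · intro hb
    rcases le_total a b with hab | hba
    · exact EqvGen.reflTransGen_le_eqvGen _ _ _ (reflTransGen_isArc_of_mem_part hab hb)
    · refine .symm _ _ (EqvGen.reflTransGen_le_eqvGen _ _ _ (reflTransGen_isArc_of_mem_part hba ?_))
      rw [P.part_eq_of_mem (P.part_mem.2 (mem_univ a)) hb]
      exact P.mem_part (mem_univ a)
  · intro h
    rw [P.mem_part_iff_part_eq_part (mem_univ _) (mem_univ _)]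
    induction h with
    | rel a b h => exact h.part_eq
    | refl => rfl
    | symm a b _ ih => exact ih.symm
    | trans a b c _ _ ih ih' => exact ih'.trans ih

theorem eq_chainPartition_isArc (P : Finpartition (univ : Finset (Fin n))) :
    P = chainPartition (IsArc P) :=
  ext_of_mem_part fun _ _ => by rw [mem_part_iff_eqvGen_isArc, mem_part_chainPartition]

theorem ext_of_isArc {Q : Finpartition (univ : Finset (Fin n))}
    (h : ∀ a b, IsArc P a b ↔ IsArc Q a b) : P = Q := by
  rw [P.eq_chainPartition_isArc, Q.eq_chainPartition_isArc]
  congr 1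
  ext a b
  exact h a b

end Finpartition

namespace ColoredPartition

variable {n r : ℕ} {Λ : ColoredPartition n r} {i j i' j' : Fin n} {c : Fin r}

variable (Λ) in
def IsSequential : Prop :=
  ∀ ⦃i j i' j'⦄ (h : IsArc Λ.P i j) (h' : IsArc Λ.P i' j'),
    Λ.color i j h = Λ.color i' j' h' → i < i' → j ≤ i'

theorem isSequential_iff : Λ.IsSequential ↔ ¬HasCrossing Λ 2 ∧ ¬HasNesting Λ 2 := by
  constructor
  · intro hΛ
    constructor <;>
    · rintro ⟨f, g, c, hf, -, hfg, harcs⟩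
      obtain ⟨⟨h₀, hc₀⟩, ⟨h₁, hc₁⟩⟩ := Fin.forall_fin_two.1 harcs
      exact (hΛ h₀ h₁ (hc₀.trans hc₁.symm) (hf Fin.zero_lt_one)).not_gt (hfg 1 0)
  · rintro ⟨hcr, hne⟩ i j i' j' h h' hc hii'
    by_contra! hi'j
    have hjj' : j ≠ j' := fun hjj' => hii'.ne (IsArc.leftUnique h (hjj' ▸ h'))
    have hf : StrictMono ![i, i'] := Fin.strictMono_iff_lt_succ.2 (by simpa using hii')
    have hfg : ∀ s t : Fin 2, ![i, i'] s < ![j, j'] t := by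
      simp [Fin.forall_fin_two, h.lt, hi'j, h'.lt, hii'.trans h'.lt]
    have harcs : ∀ t : Fin 2, ∃ ht : IsArc Λ.P (![i, i'] t) (![j, j'] t),
        Λ.color _ _ ht = Λ.color i j h := Fin.forall_fin_two.2 ⟨⟨h, rfl⟩, ⟨h', hc.symm⟩⟩
    rcases hjj'.lt_or_gt with hjj' | hjj'
    · exact hcr ⟨_, _, _, hf, Fin.strictMono_iff_lt_succ.2 (by simpa using hjj'), hfg, harcs⟩
    · exact hne ⟨_, _, _, hf, Fin.strictAnti_iff_succ_lt.2 (by simpa using hjj'), hfg, harcs⟩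

theorem IsSequential.eq_of_overlap (hΛ : Λ.IsSequential) (h : IsArc Λ.P i j)
    (h' : IsArc Λ.P i' j') (hc : Λ.color i j h = Λ.color i' j' h') (hij' : i < j')
    (hi'j : i' < j) : i = i' ∧ j = j' := by
  obtain rfl : i = i' := by
    rcases lt_trichotomy i i' with hii' | hii' | hii'
    · exact absurd (hΛ h h' hc hii') hi'j.not_ge
    · exact hii'
    · exact absurd (hΛ h' h hc.symm hii') hij'.not_ge
  exact ⟨rfl, IsArc.rightUnique h h'⟩

theorem ext_of_isArc {Λ' : ColoredPartition n r} (harc : ∀ i j, IsArc Λ.P i j ↔ IsArc Λ'.P i j)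
    (hcol : ∀ i j h h', Λ.color i j h = Λ'.color i j h') : Λ = Λ' := by
  obtain ⟨P, col⟩ := Λ
  obtain ⟨P', col'⟩ := Λ'
  obtain rfl := Finpartition.ext_of_isArc harc
  congr
  funext i j h
  exact hcol i j h h

/-- The letter at a point: the color of the arc ending there and that of the arc starting
there. -/
abbrev Letter (r : ℕ) := Option (Fin r) × Option (Fin r)

/-- `s c` says that an arc of color `c` is open. -/
def step (s : Fin r → Bool) (ℓ : Letter r) : Option (Fin r → Bool) :=
  if (∀ c, ℓ.1 = some c → s c) ∧ (∀ c, ℓ.2 = some c → ℓ.1 = some c ∨ s c = false) then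
    some fun c => if ℓ.2 = some c then true else if ℓ.1 = some c then false else s c
  else none

theorem step_eq_some_iff {s s' : Fin r → Bool} {ℓ : Letter r} :
    step s ℓ = some s' ↔
      (∀ c, ℓ.1 = some c → s c) ∧ (∀ c, ℓ.2 = some c → ℓ.1 = some c ∨ s c = false) ∧
      ∀ c, s' c = if ℓ.2 = some c then true else if ℓ.1 = some c then false else s c := by
  unfold step
  split_ifs with h
  · rw [Option.some.injEq, eq_comm, funext_iff]
    exact ⟨fun h' => ⟨h.1, h.2, h'⟩, fun h' => h'.2.2⟩
  · exact iff_of_false nofun fun h' => h ⟨h'.1, h'.2.1⟩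

/-- The state after the first `k` letters; `none` once a letter is rejected, and for `k > n`. -/
def run (s : Fin r → Bool) (w : Fin n → Letter r) : ℕ → Option (Fin r → Bool)
  | 0 => some s
  | k + 1 => if h : k < n then (run s w k).bind (step · (w ⟨k, h⟩)) else none

def Accepts (w : Fin n → Letter r) : Prop := run ⊥ w n = some ⊥

variable (r) in
def transferMatrix : Matrix (Fin r → Bool) (Fin r → Bool) ℕ :=
  fun s s' => #{ℓ : Letter r | step s ℓ = some s'}

theorem run_succ_eq_bind (s : Fin r → Bool) (w : Fin (n + 1) → Letter r) {k : ℕ} (hk : k ≤ n) :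
    run s w (k + 1) = (step s (w 0)).bind fun s' => run s' (Fin.tail w) k := by
  induction k with
  | zero => simp [run]
  | succ k ih =>
    rw [run, dif_pos (by omega), ih (by omega), Option.bind_assoc]
    congr 1
    funext s'
    rw [run, dif_pos (by omega)]
    rfl

theorem card_run_eq_transferMatrix_pow (n : ℕ) (s : Fin r → Bool) :
    Nat.card {w : Fin n → Letter r // run s w n = some ⊥} = (transferMatrix r ^ n) s ⊥ := by
  induction n generalizing s with
  | zero =>
    rw [pow_zero, Matrix.one_apply]
    split_ifs with hs <;> simp [run, hs]
  | succ n ih =>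
    have e : {w : Fin (n + 1) → Letter r // run s w (n + 1) = some ⊥} ≃
        Σ ℓ : Letter r, {v : Fin n → Letter r // (step s ℓ).bind (run · v n) = some ⊥} :=
      (Equiv.subtypeEquiv (Fin.consEquiv fun _ => Letter r).symm fun w => by
        rw [run_succ_eq_bind s w le_rfl]; rfl).trans
        (Equiv.subtypeProdEquivSigmaSubtype fun ℓ v => (step s ℓ).bind (run · v n) = some ⊥)
    rw [Nat.card_congr e, Nat.card_sigma, pow_succ', Matrix.mul_apply]
    simp only [transferMatrix, card_eq_sum_ones, sum_mul, sum_filter]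
    rw [sum_comm]
    refine sum_congr rfl fun ℓ _ => ?_
    cases step s ℓ with
    | none => simp
    | some s' => simp [← ih s', Nat.card_eq_fintype_card]

open Classical in
noncomputable def openColor (Λ : ColoredPartition n r) (i : Fin n) : Option (Fin r) :=
  if h : ∃ j, IsArc Λ.P i j then some (Λ.color i h.choose h.choose_spec) else none

open Classical in
noncomputable def closeColor (Λ : ColoredPartition n r) (j : Fin n) : Option (Fin r) :=
  if h : ∃ i, IsArc Λ.P i j then some (Λ.color h.choose j h.choose_spec) else none

theorem openColor_eq_some_iff : Λ.openColor i = some c ↔ ∃ j h, Λ.color i j h = c := by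
  unfold openColor
  split_ifs with h
  · refine ⟨fun hc => ⟨_, _, Option.some_injective _ hc⟩, ?_⟩
    rintro ⟨j, hj, rfl⟩
    obtain rfl := IsArc.rightUnique h.choose_spec hj
    rfl
  · exact iff_of_false nofun fun ⟨j, hj, _⟩ => h ⟨j, hj⟩

theorem closeColor_eq_some_iff : Λ.closeColor j = some c ↔ ∃ i h, Λ.color i j h = c := by
  unfold closeColor
  split_ifs with h
  · refine ⟨fun hc => ⟨_, _, Option.some_injective _ hc⟩, ?_⟩
    rintro ⟨i, hi, rfl⟩
    obtain rfl := IsArc.leftUnique h.choose_spec hi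
    rfl
  · exact iff_of_false nofun fun ⟨i, hi, _⟩ => h ⟨i, hi⟩

theorem openColor_of_isArc (h : IsArc Λ.P i j) : Λ.openColor i = some (Λ.color i j h) :=
  openColor_eq_some_iff.2 ⟨j, h, rfl⟩

theorem closeColor_of_isArc (h : IsArc Λ.P i j) : Λ.closeColor j = some (Λ.color i j h) :=
  closeColor_eq_some_iff.2 ⟨i, h, rfl⟩

noncomputable def word (Λ : ColoredPartition n r) (i : Fin n) : Letter r :=
  (Λ.closeColor i, Λ.openColor i)

def Covers (Λ : ColoredPartition n r) (k : ℕ) (c : Fin r) : Prop :=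
  ∃ i j, ∃ h : IsArc Λ.P i j, i.1 < k ∧ k ≤ j.1 ∧ Λ.color i j h = c

open Classical in
noncomputable def coverState (Λ : ColoredPartition n r) (k : ℕ) : Fin r → Bool :=
  fun c => decide (Λ.Covers k c)

open Classical in
theorem coverState_eq_true_iff {k : ℕ} : Λ.coverState k c = true ↔ Λ.Covers k c :=
  decide_eq_true_iff

theorem coverState_eq_false_iff {k : ℕ} : Λ.coverState k c = false ↔ ¬Λ.Covers k c := by
  rw [Bool.eq_false_iff, Ne, coverState_eq_true_iff]

theorem coverState_zero (Λ : ColoredPartition n r) : Λ.coverState 0 = ⊥ := by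
  funext c
  rw [Pi.bot_apply, bot_eq_false, coverState_eq_false_iff]
  rintro ⟨i, j, -, hi, -⟩
  exact Nat.not_lt_zero _ hi

theorem coverState_last (Λ : ColoredPartition n r) : Λ.coverState n = ⊥ := by
  funext c
  rw [Pi.bot_apply, bot_eq_false, coverState_eq_false_iff]
  rintro ⟨i, j, -, -, hj, -⟩
  exact hj.not_gt j.2

theorem IsSequential.covers_succ_iff (hΛ : Λ.IsSequential) (p : Fin n) :
    Λ.Covers (p + 1) c ↔
      Λ.openColor p = some c ∨ (Λ.Covers p c ∧ Λ.closeColor p ≠ some c) := by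
  constructor
  · rintro ⟨i, j, h, hip, hpj, rfl⟩
    rcases (Nat.lt_succ_iff.1 hip).eq_or_lt with hip | hip
    · obtain rfl : i = p := Fin.ext hip
      exact .inl (openColor_of_isArc h)
    refine .inr ⟨⟨i, j, h, hip, by omega, rfl⟩, fun hcl => ?_⟩
    obtain ⟨i₀, h₀, hc₀⟩ := closeColor_eq_some_iff.1 hcl
    have := (hΛ.eq_of_overlap h h₀ hc₀.symm hip (h₀.lt.trans (Fin.lt_def.2 (by omega)))).2
    omega
  · rintro (hop | ⟨⟨i, j, h, hip, hpj, rfl⟩, hcl⟩)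
    · obtain ⟨j, h, rfl⟩ := openColor_eq_some_iff.1 hop
      exact ⟨p, j, h, by omega, h.lt, rfl⟩
    · refine ⟨i, j, h, by omega, Nat.succ_le_of_lt (lt_of_le_of_ne hpj fun hpj => ?_), rfl⟩
      obtain rfl : p = j := Fin.ext hpj
      exact hcl (closeColor_of_isArc h)

theorem IsSequential.step_coverState (hΛ : Λ.IsSequential) (p : Fin n) :
    step (Λ.coverState p) (Λ.word p) = some (Λ.coverState (p + 1)) := by
  simp only [step_eq_some_iff, word, coverState_eq_true_iff, coverState_eq_false_iff]
  refine ⟨fun c hcl => ?_, fun c hop => ?_, fun c => ?_⟩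
  · obtain ⟨i, h, rfl⟩ := closeColor_eq_some_iff.1 hcl
    exact ⟨i, p, h, h.lt, le_rfl, rfl⟩
  · obtain ⟨j, h, rfl⟩ := openColor_eq_some_iff.1 hop
    refine or_iff_not_imp_right.2 fun hcov => ?_
    obtain ⟨i, j', h', hip, hpj', hc⟩ := not_not.1 hcov
    obtain rfl : j' = p := le_antisymm (hΛ h' h hc (Fin.lt_def.2 hip)) (Fin.le_def.2 hpj')
    rw [closeColor_of_isArc h', hc]
  · split_ifs with hop hcl
    · exact coverState_eq_true_iff.2 ((hΛ.covers_succ_iff p).2 (.inl hop))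
    · exact coverState_eq_false_iff.2 fun h => ((hΛ.covers_succ_iff p).1 h).elim hop (·.2 hcl)
    · rw [Bool.eq_iff_iff, coverState_eq_true_iff, coverState_eq_true_iff, hΛ.covers_succ_iff]
      simp [hop, hcl]

theorem IsSequential.run_word (hΛ : Λ.IsSequential) {k : ℕ} (hk : k ≤ n) :
    run ⊥ Λ.word k = some (Λ.coverState k) := by
  induction k with
  | zero => rw [run, coverState_zero]
  | succ k ih =>
    rw [run, dif_pos (Nat.lt_of_succ_le hk), ih (by omega), Option.bind_some]
    exact hΛ.step_coverState ⟨k, hk⟩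

theorem IsSequential.accepts_word (hΛ : Λ.IsSequential) : Accepts Λ.word := by
  rw [Accepts, hΛ.run_word le_rfl, coverState_last]

section OfWord

variable {w : Fin n → Letter r}

theorem exists_run_of_run_succ {s : Fin r → Bool} {k : ℕ} {x : Fin r → Bool}
    (h : run s w (k + 1) = some x) : ∃ y, run s w k = some y := by
  rw [run] at h
  split_ifs at h
  obtain ⟨y, hy, -⟩ := Option.bind_eq_some_iff.1 h
  exact ⟨y, hy⟩

variable (w) in
noncomputable def runState (k : ℕ) : Fin r → Bool := (run ⊥ w k).getD ⊥

theorem Accepts.run_eq (hw : Accepts w) {k : ℕ} (hk : k ≤ n) :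
    run ⊥ w k = some (runState w k) := by
  obtain ⟨y, hy⟩ : ∃ y, run ⊥ w k = some y := by
    induction hk using Nat.decreasingInduction with
    | self => exact ⟨⊥, hw⟩
    | of_succ k _ ih => exact exists_run_of_run_succ ih.choose_spec
  rw [runState, hy, Option.getD_some]

theorem Accepts.step_runState (hw : Accepts w) (p : Fin n) :
    step (runState w p) (w p) = some (runState w (p + 1)) := by
  have h := hw.run_eq p.2
  rwa [run, dif_pos p.2, hw.run_eq p.2.le, Option.bind_some] at h

theorem Accepts.runState_last (hw : Accepts w) : runState w n = ⊥ :=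
  Option.some_injective _ ((hw.run_eq le_rfl).symm.trans hw)

theorem Accepts.runState_eq_true_iff (hw : Accepts w) {m : ℕ} (hm : m ≤ n) :
    runState w m c = true ↔ ∃ i : Fin n, i.1 < m ∧ (w i).2 = some c ∧
      ∀ p : Fin n, i < p → p.1 < m → (w p).1 ≠ some c := by
  induction m with
  | zero => simp [runState, run]
  | succ m ih =>
    set q : Fin n := ⟨m, hm⟩
    have hq : q.1 = m := rfl
    rw [(step_eq_some_iff.1 (hw.step_runState q)).2.2 c]
    have lt_of_lt_succ {i : Fin n} (hi : i.1 < m + 1) (hic : (w i).2 = some c)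
        (hqc : (w q).2 ≠ some c) : i < q :=
      Fin.lt_def.2 (lt_of_le_of_ne (by omega) fun h => hqc (by rwa [← Fin.ext h]))
    split_ifs with hop hcl
    · refine iff_of_true rfl ⟨q, by omega, hop, fun p hp hpm => ?_⟩
      exact absurd hp (not_lt.2 (Fin.le_def.2 (by omega)))
    · refine iff_of_false (by simp) fun ⟨i, hi, hic, hnone⟩ => ?_
      exact hnone q (lt_of_lt_succ hi hic hop) (by omega) hcl
    · rw [ih (by omega)]
      constructor
      · rintro ⟨i, hi, hic, hnone⟩
        refine ⟨i, by omega, hic, fun p hip hpm => ?_⟩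
        rcases (Nat.lt_succ_iff.1 hpm).eq_or_lt with hpm | hpm
        · rwa [show p = q from Fin.ext hpm]
        · exact hnone p hip hpm
      · rintro ⟨i, hi, hic, hnone⟩
        exact ⟨i, lt_of_lt_succ hi hic hop, hic, fun p hip hpm => hnone p hip (by omega)⟩

variable (w) in
def Matches (i j : Fin n) : Prop :=
  ∃ c, (w i).2 = some c ∧ (w j).1 = some c ∧ i < j ∧ ∀ p, i < p → p < j → (w p).1 ≠ some c

theorem Matches.lt (h : Matches w i j) : i < j := h.choose_spec.2.2.1

theorem matches_rightUnique : Relator.RightUnique (Matches w) := by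
  rintro i j j' ⟨c, hi, hj, hij, hnone⟩ ⟨c', hi', hj', hij', hnone'⟩
  obtain rfl : c = c' := Option.some_injective _ (hi.symm.trans hi')
  by_contra hne
  rcases lt_or_gt_of_ne hne with h | h
  · exact hnone' j hij h hj
  · exact hnone j' hij' h hj'

theorem Accepts.exists_matches_of_open (hw : Accepts w) (hc : (w i).2 = some c) :
    ∃ j, Matches w i j := by
  have hne : {j | i < j ∧ (w j).1 = some c}.Nonempty := by
    by_contra! hempty
    have := (hw.runState_eq_true_iff le_rfl).2 ⟨i, i.2, hc, fun p hip _ hp =>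
      Set.eq_empty_iff_forall_notMem.1 hempty p ⟨hip, hp⟩⟩
    rw [hw.runState_last] at this
    exact Bool.false_ne_true this
  obtain ⟨j, ⟨hij, hj⟩, hmin⟩ := wellFounded_lt.has_min _ hne
  exact ⟨j, c, hc, hj, hij, fun p hip hpj hp => hmin p ⟨hip, hp⟩ hpj⟩

theorem Accepts.exists_matches_of_close (hw : Accepts w) (hc : (w j).1 = some c) :
    ∃ i, Matches w i j := by
  have hopen := (step_eq_some_iff.1 (hw.step_runState j)).1 c hc
  obtain ⟨i, hij, hi, hnone⟩ := (hw.runState_eq_true_iff j.2.le).1 hopen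
  exact ⟨i, c, hi, hc, Fin.lt_def.2 hij, fun p hip hpj => hnone p hip hpj⟩

theorem Accepts.le_of_matches (hw : Accepts w) (h : Matches w i j) (hc : (w i).2 = some c)
    (hc' : (w i').2 = some c) (hii' : i < i') : j ≤ i' := by
  obtain ⟨c₀, hi, -, -, hnone⟩ := h
  obtain rfl : c = c₀ := Option.some_injective _ (hc.symm.trans hi)
  by_contra! hi'j
  have hopen : runState w i' c = true := (hw.runState_eq_true_iff i'.2.le).2
    ⟨i, hii', hc, fun p hip hpi' => hnone p hip (hpi'.trans hi'j)⟩
  rcases (step_eq_some_iff.1 (hw.step_runState i')).2.1 c hc' with hcl | hclosed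
  · exact hnone i' hii' hi'j hcl
  · exact Bool.false_ne_true (hclosed.symm.trans hopen)

theorem Accepts.matches_leftUnique (hw : Accepts w) : Relator.LeftUnique (Matches w) := by
  have not_lt_of_matches {i i' j} (h : Matches w i j) (h' : Matches w i' j) : ¬i < i' := by
    intro hii'
    obtain ⟨c, hi, hj, -⟩ := id h
    obtain ⟨c', hi', hj', -⟩ := id h'
    obtain rfl : c = c' := Option.some_injective _ (hj.symm.trans hj')
    exact (hw.le_of_matches h hi hi' hii').not_gt h'.lt
  exact fun i i' j h h' =>
    le_antisymm (not_lt.1 (not_lt_of_matches h' h)) (not_lt.1 (not_lt_of_matches h h'))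

theorem Accepts.isArc_chainPartition_iff (hw : Accepts w) :
    IsArc (chainPartition (Matches w)) i j ↔ Matches w i j :=
  _root_.isArc_chainPartition_iff (fun _ _ => Matches.lt) hw.matches_leftUnique matches_rightUnique

noncomputable def ofWord (w : Fin n → Letter r) (hw : Accepts w) : ColoredPartition n r where
  P := chainPartition (Matches w)
  color i j h := (w i).2.get <| by
    obtain ⟨c, hc, -⟩ := hw.isArc_chainPartition_iff.1 h
    simp [hc]

theorem Accepts.isArc_ofWord_iff (hw : Accepts w) : IsArc (ofWord w hw).P i j ↔ Matches w i j :=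
  hw.isArc_chainPartition_iff

theorem color_ofWord (hw : Accepts w) (h : IsArc (ofWord w hw).P i j) (hc : (w i).2 = some c) :
    (ofWord w hw).color i j h = c := by
  simp [ofWord, hc]

theorem isSequential_ofWord (hw : Accepts w) : (ofWord w hw).IsSequential := by
  intro i j i' j' h h' hcol hii'
  have hm := hw.isArc_ofWord_iff.1 h
  obtain ⟨c, hc, -⟩ := id hm
  obtain ⟨c', hc', -⟩ := hw.isArc_ofWord_iff.1 h'
  rw [color_ofWord hw h hc, color_ofWord hw h' hc'] at hcol
  exact hw.le_of_matches hm hc (hcol ▸ hc') hii'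

theorem word_ofWord (hw : Accepts w) : (ofWord w hw).word = w := by
  funext p
  refine Prod.ext (Option.ext fun c => ?_) (Option.ext fun c => ?_)
  · rw [word, closeColor_eq_some_iff]
    constructor
    · rintro ⟨i, h, rfl⟩
      obtain ⟨c, hc, hpc, -⟩ := hw.isArc_ofWord_iff.1 h
      rwa [color_ofWord hw h hc]
    · intro hpc
      obtain ⟨i, hm⟩ := hw.exists_matches_of_close hpc
      obtain ⟨c', hc', hpc', -⟩ := id hm
      refine ⟨i, hw.isArc_ofWord_iff.2 hm, ?_⟩
      rw [color_ofWord hw _ hc']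
      exact Option.some_injective _ (hpc'.symm.trans hpc)
  · rw [word, openColor_eq_some_iff]
    constructor
    · rintro ⟨j, h, rfl⟩
      obtain ⟨c, hc, -⟩ := hw.isArc_ofWord_iff.1 h
      rwa [color_ofWord hw h hc]
    · intro hpc
      obtain ⟨j, hm⟩ := hw.exists_matches_of_open hpc
      exact ⟨j, hw.isArc_ofWord_iff.2 hm, color_ofWord hw _ hpc⟩

end OfWord

theorem IsSequential.matches_word_iff (hΛ : Λ.IsSequential) :
    Matches Λ.word i j ↔ IsArc Λ.P i j := by
  constructor
  · rintro ⟨c, hop, hcl, hij, hnone⟩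
    obtain ⟨j', h, rfl⟩ := openColor_eq_some_iff.1 hop
    obtain ⟨i', h', hc⟩ := closeColor_eq_some_iff.1 hcl
    have hjj' : j ≤ j' := not_lt.1 fun hj'j => hnone j' h.lt hj'j (closeColor_of_isArc h)
    obtain ⟨-, rfl⟩ := hΛ.eq_of_overlap h h' hc.symm hij (h'.lt.trans_le hjj')
    exact h
  · intro h
    refine ⟨_, openColor_of_isArc h, closeColor_of_isArc h, h.lt, fun p hip hpj hcl => ?_⟩
    obtain ⟨i', h', hc⟩ := closeColor_eq_some_iff.1 hcl
    exact hpj.ne (hΛ.eq_of_overlap h h' hc.symm hip (h'.lt.trans hpj)).2.symm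

theorem IsSequential.ofWord_word (hΛ : Λ.IsSequential) : ofWord Λ.word hΛ.accepts_word = Λ :=
  ext_of_isArc (fun _ _ => hΛ.accepts_word.isArc_ofWord_iff.trans hΛ.matches_word_iff)
    fun _ _ h h' => color_ofWord _ h (openColor_of_isArc h')

noncomputable def wordEquiv :
    {Λ : ColoredPartition n r // Λ.IsSequential} ≃ {w : Fin n → Letter r // Accepts w} where
  toFun Λ := ⟨Λ.1.word, Λ.2.accepts_word⟩
  invFun w := ⟨ofWord w.1 w.2, isSequential_ofWord w.2⟩
  left_inv Λ := Subtype.ext Λ.2.ofWord_word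
  right_inv w := Subtype.ext (word_ofWord w.2)

theorem ncn222_eq_transferMatrix_pow (n : ℕ) : ncn222 n = (transferMatrix 2 ^ n) ⊥ ⊥ := by
  rw [ncn222, ← card_run_eq_transferMatrix_pow]
  exact Nat.card_congr ((Equiv.subtypeEquivRight fun _ => isSequential_iff.symm).trans wordEquiv)

theorem ncn222_recurrence (n : ℕ) :
    ncn222 (n + 3) + 11 * ncn222 (n + 1) = 7 * ncn222 (n + 2) + ncn222 n := by
  simp only [ncn222_eq_transferMatrix_pow]
  set T := transferMatrix 2
  -- `(M * Tⁿ) ⊥ ⊥` depends only on the `⊥`-row of `M`.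
  have hrow : (T ^ 3 + 11 • T) ⊥ = (7 • T ^ 2 + 1 : Matrix _ _ ℕ) ⊥ := by decide
  have key : ((T ^ 3 + 11 • T) * T ^ n) ⊥ ⊥ = ((7 • T ^ 2 + 1) * T ^ n : Matrix _ _ ℕ) ⊥ ⊥ := by
    simp only [Matrix.mul_apply, hrow]
  rw [add_mul, add_mul, smul_mul_assoc, smul_mul_assoc, one_mul, ← pow_succ', ← pow_add,
    ← pow_add, add_comm 3, add_comm 2] at key
  simpa only [Matrix.add_apply, Matrix.smul_apply, smul_eq_mul] using key

end ColoredPartition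

/-- `Σ NCN_{2,2}(n,2) xⁿ = (1 − 6x + 7x²)/(1 − 7x + 11x² − x³)`. -/
theorem stmt12 :
    (PowerSeries.mk fun n => (ncn222 n : ℚ)) *
        (1 - 7 * PowerSeries.X + 11 * PowerSeries.X ^ 2 - PowerSeries.X ^ 3) =
      1 - 6 * PowerSeries.X + 7 * PowerSeries.X ^ 2 := by
  have hrec (n : ℕ) : (ncn222 (n + 3) : ℚ) =
      7 * ncn222 (n + 2) + -11 * ncn222 (n + 1) + 1 * ncn222 n := by
    have : (ncn222 (n + 3) + 11 * ncn222 (n + 1) : ℚ) = 7 * ncn222 (n + 2) + ncn222 n := by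
      exact_mod_cast ColoredPartition.ncn222_recurrence n
    linear_combination this
  have h := PowerSeries.mk_mul_eq_of_recurrence (fun n => (ncn222 n : ℚ)) _ _ _ hrec
  have h₀ : ncn222 0 = 1 := by rw [ColoredPartition.ncn222_eq_transferMatrix_pow]; decide
  have h₁ : ncn222 1 = 1 := by rw [ColoredPartition.ncn222_eq_transferMatrix_pow]; decide
  have h₂ : ncn222 2 = 3 := by rw [ColoredPartition.ncn222_eq_transferMatrix_pow]; decide
  norm_num [h₀, h₁, h₂, map_ofNat] at h
  linear_combination h
end
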